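/- arXiv:2410.23288 — 6 statements merged into one kernel-verified Lean document; each statement's English description precedes it below -/
import Mathlib

section
/- Let S = Λ + M be a periodic point set in ℝ^n and let G be a Λ-periodic graph on S. If (QC) for all p, q ∈ S there exists v ∈ Λ such that p and q + v are joined by a path in G, and (TS) the subgroup of Λ generated by the set {v ∈ Λ : there exists p ∈ S with p and p + v joined by a path in G} equals Λ, then any two points of S are joined by a path in G (the lifted periodic graph G is connected on S). -/
/-!
Under (QC) every point of `S` reaches some translate of every other, so it suffices that each
`p ∈ S` reaches `p + v` for every `v ∈ Λ`. By periodicity, the lattice vectors `v` for which `p`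
reaches `p + v` form a subgroup of `Λ`; and (QC) transports a cycle vector found at any base
point `q` to the base point `p`. So this subgroup contains the generators in (TS) and equals `Λ`.
-/

noncomputable section

/-- The lattice Λ generated by the basis `b`: the ℤ-span of the basis vectors,
i.e. the set of all integer linear combinations of the basis vectors. -/
def lat {n : ℕ} (b : Module.Basis (Fin n) ℝ (EuclideanSpace ℝ (Fin n))) :
    Submodule ℤ (EuclideanSpace ℝ (Fin n)) :=
  Submodule.span ℤ (Set.range (b : Fin n → EuclideanSpace ℝ (Fin n)))

/-- The unit cell U of the basis `b`: points whose coordinates t_i in the basis satisfy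
0 ≤ t_i < 1. -/
def unitCell {n : ℕ} (b : Module.Basis (Fin n) ℝ (EuclideanSpace ℝ (Fin n))) :
    Set (EuclideanSpace ℝ (Fin n)) :=
  {x | ∀ i, 0 ≤ b.repr x i ∧ b.repr x i < 1}

/-- The periodic point set S = Λ + M. -/
def periodicSet {n : ℕ} (b : Module.Basis (Fin n) ℝ (EuclideanSpace ℝ (Fin n)))
    (M : Set (EuclideanSpace ℝ (Fin n))) : Set (EuclideanSpace ℝ (Fin n)) :=
  {x | ∃ l ∈ (lat b : Set (EuclideanSpace ℝ (Fin n))), ∃ p ∈ M, x = l + p}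

namespace SimpleGraph

variable {V : Type*} [AddCommGroup V] {G : SimpleGraph V} {L : Submodule ℤ V}

theorem Reachable.add_right_of_mem (hper : ∀ v ∈ L, ∀ p q, G.Adj p q → G.Adj (p + v) (q + v))
    {v : V} (hv : v ∈ L) {p q : V} (h : G.Reachable p q) : G.Reachable (p + v) (q + v) :=
  h.map ⟨fun x => x + v, hper v hv _ _⟩

def latticePeriods (hper : ∀ v ∈ L, ∀ p q, G.Adj p q → G.Adj (p + v) (q + v)) (p : V) :
    AddSubgroup V where
  carrier := {v | v ∈ L ∧ G.Reachable p (p + v)}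
  zero_mem' := ⟨L.zero_mem, by simp⟩
  add_mem' := by
    rintro x y ⟨hx, hpx⟩ ⟨hy, hpy⟩
    refine ⟨L.add_mem hx hy, ?_⟩
    simpa [add_assoc, add_comm y x] using hpx.trans (hpy.add_right_of_mem hper hx)
  neg_mem' := by
    rintro x ⟨hx, hpx⟩
    exact ⟨L.neg_mem hx, by simpa using (hpx.add_right_of_mem hper (L.neg_mem hx)).symm⟩

theorem reachable_self_add_of_reachable_add
    (hper : ∀ v ∈ L, ∀ p q, G.Adj p q → G.Adj (p + v) (q + v))
    {p q v w : V} (hpq : G.Reachable p (q + w)) (hw : w ∈ L) (hv : v ∈ L)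
    (hq : G.Reachable q (q + v)) : G.Reachable p (p + v) := by
  have hqw : G.Reachable (q + w) (q + w + v) := by
    simpa [add_right_comm] using hq.add_right_of_mem hper hw
  exact (hpq.trans hqw).trans (hpq.add_right_of_mem hper hv).symm

theorem reachable_self_add_of_span_eq
    (hper : ∀ v ∈ L, ∀ p q, G.Adj p q → G.Adj (p + v) (q + v)) {S : Set V}
    (hQC : ∀ p ∈ S, ∀ q ∈ S, ∃ w ∈ L, G.Reachable p (q + w))
    (hTS : Submodule.span ℤ {v | v ∈ L ∧ ∃ q ∈ S, G.Reachable q (q + v)} = L)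
    {p : V} (hp : p ∈ S) {v : V} (hv : v ∈ L) : G.Reachable p (p + v) := by
  have hgen : {v | v ∈ L ∧ ∃ q ∈ S, G.Reachable q (q + v)} ⊆ latticePeriods hper p := by
    rintro u ⟨hu, q, hq, hqu⟩
    obtain ⟨w, hw, hpq⟩ := hQC p hp q hq
    exact ⟨hu, reachable_self_add_of_reachable_add hper hpq hw hu hqu⟩
  have hle : Submodule.span ℤ {v | v ∈ L ∧ ∃ q ∈ S, G.Reachable q (q + v)} ≤
      (latticePeriods hper p).toIntSubmodule :=
    Submodule.span_le.mpr hgen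
  rw [hTS] at hle
  exact (hle hv).2

end SimpleGraph

theorem lifted_graph_connected_general {n : ℕ}
    (b : Module.Basis (Fin n) ℝ (EuclideanSpace ℝ (Fin n)))
    (M : Set (EuclideanSpace ℝ (Fin n)))
    (G : SimpleGraph (EuclideanSpace ℝ (Fin n)))
    (hper : ∀ v ∈ lat b, ∀ p q : EuclideanSpace ℝ (Fin n), G.Adj p q → G.Adj (p + v) (q + v))
    (hQC : ∀ p ∈ periodicSet b M, ∀ q ∈ periodicSet b M,
      ∃ v ∈ lat b, G.Reachable p (q + v))
    (hTS : Submodule.span ℤ {v : EuclideanSpace ℝ (Fin n) |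
      v ∈ lat b ∧ ∃ p ∈ periodicSet b M, G.Reachable p (p + v)} = lat b) :
    ∀ p ∈ periodicSet b M, ∀ q ∈ periodicSet b M, G.Reachable p q := by
  intro p hp q hq
  obtain ⟨v, hv, hpq⟩ := hQC p hp q hq
  exact hpq.trans (SimpleGraph.reachable_self_add_of_span_eq hper hQC hTS hq hv).symm

/-- Let S = Λ + M be a periodic point set in ℝ^n and G a Λ-periodic graph on S.
If (QC) for all p, q ∈ S there is v ∈ Λ with p and q + v joined by a path in G, and
(TS) the subgroup of Λ generated by {v ∈ Λ : ∃ p ∈ S, p and p + v joined by a path in G}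
equals Λ, then any two points of S are joined by a path in G. -/
theorem lifted_graph_connected {n : ℕ}
    (b : Module.Basis (Fin n) ℝ (EuclideanSpace ℝ (Fin n)))
    (M : Set (EuclideanSpace ℝ (Fin n))) (hMfin : M.Finite) (hMne : M.Nonempty)
    (hMU : M ⊆ unitCell b)
    (G : SimpleGraph (EuclideanSpace ℝ (Fin n)))
    (hedge : ∀ p q, G.Adj p q → p ∈ periodicSet b M ∧ q ∈ periodicSet b M)
    (hper : ∀ v ∈ lat b, ∀ p q : EuclideanSpace ℝ (Fin n), G.Adj p q → G.Adj (p + v) (q + v))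
    (hQC : ∀ p ∈ periodicSet b M, ∀ q ∈ periodicSet b M,
      ∃ v ∈ lat b, G.Reachable p (q + v))
    (hTS : Submodule.span ℤ {v : EuclideanSpace ℝ (Fin n) |
      v ∈ lat b ∧ ∃ p ∈ periodicSet b M, G.Reachable p (p + v)} = lat b) :
    ∀ p ∈ periodicSet b M, ∀ q ∈ periodicSet b M, G.Reachable p q :=
  lifted_graph_connected_general b M G hper hQC hTS
end
end

section
/- Let S = Λ + M be a periodic point set in ℝ^n and let G be a Λ-periodic graph on S. Then any two points of S are joined by a path in G if and only if both of the following hold: (QC) for all p, q ∈ S there exists v ∈ Λ such that p and q + v are joined by a path in G, and (TS) the subgroup of Λ generated by {v ∈ Λ : there exists p ∈ S with p and p + v joined by a path in G} equals Λ. -/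
/-!
Translating by a lattice vector is a graph automorphism, so reachability is translation
invariant. Hence if `p` reaches `q + w` with `w ∈ Λ`, any return vector `v` of `q`
(`q` reaches `q + v`) is one of `p` as well: `p ~ q + w ~ q + w + v ~ p + v`.
Under (QC) all points of `S` thus have the same return vectors; they form a subgroup of `Λ`,
which by (TS) is all of `Λ`. Then `p ~ q + w ~ q` for every `p, q ∈ S`.
-/

noncomputable section

namespace SimpleGraph

variable {V : Type*} [AddCommGroup V]

def IsPeriodic (G : SimpleGraph V) (L : Submodule ℤ V) : Prop :=
  ∀ v ∈ L, ∀ p q, G.Adj p q → G.Adj (p + v) (q + v)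

namespace IsPeriodic

variable {G : SimpleGraph V} {L : Submodule ℤ V}

def translate (hG : G.IsPeriodic L) {v : V} (hv : v ∈ L) : G →g G where
  toFun p := p + v
  map_rel' := hG v hv _ _

theorem reachable_add (hG : G.IsPeriodic L) {v p q : V} (hv : v ∈ L) (h : G.Reachable p q) :
    G.Reachable (p + v) (q + v) :=
  h.map (hG.translate hv)

theorem reachable_add_self_of_reachable (hG : G.IsPeriodic L) {p q v w : V} (hv : v ∈ L)
    (hw : w ∈ L) (hpq : G.Reachable p (q + w)) (hq : G.Reachable q (q + v)) :
    G.Reachable p (p + v) := by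
  have hqw : G.Reachable (q + w) (q + w + v) := by
    simpa only [add_right_comm q v w] using hG.reachable_add hw hq
  exact (hpq.trans hqw).trans (hG.reachable_add hv hpq).symm

def returnSubgroup (hG : G.IsPeriodic L) (p : V) : AddSubgroup V where
  carrier := {v | v ∈ L ∧ G.Reachable p (p + v)}
  zero_mem' := ⟨L.zero_mem, by rw [add_zero]⟩
  add_mem' := by
    rintro v w ⟨hv, hpv⟩ ⟨hw, hpw⟩
    refine ⟨L.add_mem hv hw, hpv.trans ?_⟩
    simpa only [add_right_comm p w v, add_assoc, add_comm w v] using hG.reachable_add hv hpw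
  neg_mem' := by
    rintro v ⟨hv, hpv⟩
    refine ⟨L.neg_mem hv, ?_⟩
    simpa only [add_neg_cancel_right] using (hG.reachable_add (L.neg_mem hv) hpv).symm

theorem reachable_iff (hG : G.IsPeriodic L) {S : Set V} (hS : ∀ p ∈ S, ∀ v ∈ L, p + v ∈ S)
    (hSne : S.Nonempty) :
    (∀ p ∈ S, ∀ q ∈ S, G.Reachable p q) ↔
      ((∀ p ∈ S, ∀ q ∈ S, ∃ v ∈ L, G.Reachable p (q + v)) ∧
        Submodule.span ℤ {v | v ∈ L ∧ ∃ p ∈ S, G.Reachable p (p + v)} = L) := by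
  obtain ⟨p₀, hp₀⟩ := hSne
  constructor
  · intro hconn
    refine ⟨fun p hp q hq => ⟨0, L.zero_mem, by simpa only [add_zero] using hconn p hp q hq⟩,
      ?_⟩
    have hreturn : {v | v ∈ L ∧ ∃ p ∈ S, G.Reachable p (p + v)} = (L : Set V) :=
      Set.Subset.antisymm (fun v hv => hv.1)
        fun v hv => ⟨hv, p₀, hp₀, hconn _ hp₀ _ (hS p₀ hp₀ v hv)⟩
    rw [hreturn, Submodule.span_eq]
  · rintro ⟨hQC, hTS⟩
    have hL : L ≤ AddSubgroup.toIntSubmodule (hG.returnSubgroup p₀) := by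
      refine hTS.symm.le.trans (Submodule.span_le.mpr ?_)
      rintro v ⟨hv, p, hp, hpv⟩
      obtain ⟨w, hw, hp₀p⟩ := hQC p₀ hp₀ p hp
      exact ⟨hv, hG.reachable_add_self_of_reachable hv hw hp₀p hpv⟩
    intro p hp q hq
    obtain ⟨w, hw, hpq⟩ := hQC p hp q hq
    obtain ⟨u, hu, hqp₀⟩ := hQC q hq p₀ hp₀
    exact hpq.trans (hG.reachable_add_self_of_reachable hw hu hqp₀ (hL hw).2).symm

end IsPeriodic

end SimpleGraph

theorem add_mem_periodicSet {n : ℕ} {b : Module.Basis (Fin n) ℝ (EuclideanSpace ℝ (Fin n))}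
    {M : Set (EuclideanSpace ℝ (Fin n))} {p v : EuclideanSpace ℝ (Fin n)}
    (hp : p ∈ periodicSet b M) (hv : v ∈ lat b) : p + v ∈ periodicSet b M := by
  obtain ⟨l, hl, m, hm, rfl⟩ := hp
  exact ⟨l + v, add_mem hl hv, m, hm, add_right_comm l m v⟩

theorem subset_periodicSet {n : ℕ} (b : Module.Basis (Fin n) ℝ (EuclideanSpace ℝ (Fin n)))
    (M : Set (EuclideanSpace ℝ (Fin n))) : M ⊆ periodicSet b M :=
  fun m hm => ⟨0, zero_mem _, m, hm, (zero_add m).symm⟩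

theorem lifted_graph_connected_iff_general {n : ℕ}
    (b : Module.Basis (Fin n) ℝ (EuclideanSpace ℝ (Fin n)))
    (M : Set (EuclideanSpace ℝ (Fin n))) (hMne : M.Nonempty)
    (G : SimpleGraph (EuclideanSpace ℝ (Fin n)))
    (hper : ∀ v ∈ lat b, ∀ p q : EuclideanSpace ℝ (Fin n), G.Adj p q → G.Adj (p + v) (q + v)) :
    (∀ p ∈ periodicSet b M, ∀ q ∈ periodicSet b M, G.Reachable p q) ↔
      ((∀ p ∈ periodicSet b M, ∀ q ∈ periodicSet b M,
          ∃ v ∈ lat b, G.Reachable p (q + v)) ∧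
        Submodule.span ℤ {v : EuclideanSpace ℝ (Fin n) |
          v ∈ lat b ∧ ∃ p ∈ periodicSet b M, G.Reachable p (p + v)} = lat b) :=
  SimpleGraph.IsPeriodic.reachable_iff hper (fun _ hp _ hv => add_mem_periodicSet hp hv)
    (hMne.mono (subset_periodicSet b M))

/-- S = Λ + M a periodic point set, G a Λ-periodic graph on S.
Any two points of S are joined by a path in G iff both (QC) and (TS) hold. -/
theorem lifted_graph_connected_iff {n : ℕ}
    (b : Module.Basis (Fin n) ℝ (EuclideanSpace ℝ (Fin n)))
    (M : Set (EuclideanSpace ℝ (Fin n))) (hMfin : M.Finite) (hMne : M.Nonempty)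
    (hMU : M ⊆ unitCell b)
    (G : SimpleGraph (EuclideanSpace ℝ (Fin n)))
    (hedge : ∀ p q, G.Adj p q → p ∈ periodicSet b M ∧ q ∈ periodicSet b M)
    (hper : ∀ v ∈ lat b, ∀ p q : EuclideanSpace ℝ (Fin n), G.Adj p q → G.Adj (p + v) (q + v)) :
    (∀ p ∈ periodicSet b M, ∀ q ∈ periodicSet b M, G.Reachable p q) ↔
      ((∀ p ∈ periodicSet b M, ∀ q ∈ periodicSet b M,
          ∃ v ∈ lat b, G.Reachable p (q + v)) ∧
        Submodule.span ℤ {v : EuclideanSpace ℝ (Fin n) |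
          v ∈ lat b ∧ ∃ p ∈ periodicSet b M, G.Reachable p (p + v)} = lat b) :=
  lifted_graph_connected_iff_general b M hMne G hper
end
end

section
/- Let S = Λ + M be a periodic point set in ℝ^n with motif M of m points, and let G be a Λ-periodic graph on S satisfying condition (QC): for all p, q ∈ S there exists v ∈ Λ such that p and q + v are joined by a path in G. Then there exists a set T ⊆ S of exactly m points containing exactly one representative of each Λ-equivalence class p + Λ (p ∈ M) such that the induced subgraph of G on T is connected (a tree of representatives exists in G). -/
noncomputable section

/-!
The tree of representatives is grown one vertex at a time, keeping the chosen points pairwise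
Λ-inequivalent and inducing a connected subgraph. While some class p + Λ is still missing, (QC)
gives a path from a chosen point to a translate of p. Its first edge leaving the represented
classes starts at a translate of some chosen point t; translating the edge by Λ so that it
starts at t itself, its other endpoint represents a new class and is adjacent to t.
-/

namespace SimpleGraph

variable {V Q : Type*} {G : SimpleGraph V}

lemma Connected.induce_insert {s : Set V} (hs : (G.induce s).Connected) {x y : V} (hy : y ∈ s)
    (hxy : G.Adj x y) : (G.induce (insert x s)).Connected := by
  have hunion : insert x s = {x, y} ∪ s := by
    rw [Set.insert_union, Set.singleton_union, Set.insert_eq_of_mem hy]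
  rw [connected_induce_iff, hunion]
  exact Subgraph.induce_union_connected (Subgraph.top_induce_pair_connected_of_adj hxy).preconnected
    (connected_induce_iff.mp hs).preconnected ⟨y, by simp, hy⟩

/-- The quotient map of a Λ-periodic graph has this property: an edge can be translated so that
it starts at any point equivalent to its source. -/
def EdgesLift (G : SimpleGraph V) (f : V → Q) : Prop :=
  ∀ ⦃a c a' : V⦄, G.Adj a c → f a' = f a → ∃ c', f c' = f c ∧ G.Adj a' c'

variable {f : V → Q} {K : Finset Q} [DecidableEq Q]

theorem exists_adj_of_image_ssubset (hlift : G.EdgesLift f) (hedge : ∀ a c, G.Adj a c → f c ∈ K)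
    (hQC : ∀ x, f x ∈ K → ∀ q ∈ K, ∃ y, f y = q ∧ G.Reachable x y)
    {T : Finset V} (hT : T.Nonempty) (hTK : T.image f ⊂ K) :
    ∃ t ∈ T, ∃ x, f x ∈ K ∧ f x ∉ T.image f ∧ G.Adj t x := by
  obtain ⟨t₀, ht₀⟩ := hT
  obtain ⟨q, hqK, hqT⟩ := Finset.exists_of_ssubset hTK
  obtain ⟨y, rfl, ⟨w⟩⟩ := hQC t₀ (hTK.subset (Finset.mem_image_of_mem f ht₀)) q hqK
  obtain ⟨d, -, hdT, hd⟩ :=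
    w.exists_boundary_dart {v | f v ∈ T.image f} (Finset.mem_image_of_mem f ht₀) hqT
  obtain ⟨t, htT, hdt⟩ := Finset.mem_image.mp hdT
  obtain ⟨x, hx, htx⟩ := hlift d.adj hdt
  exact ⟨t, htT, x, hx ▸ hedge _ _ d.adj, hx ▸ hd, htx⟩

theorem exists_connected_transversal {x₀ : V} (hx₀ : f x₀ ∈ K)
    (hlift : G.EdgesLift f) (hedge : ∀ a c, G.Adj a c → f c ∈ K)
    (hQC : ∀ x, f x ∈ K → ∀ q ∈ K, ∃ y, f y = q ∧ G.Reachable x y) :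
    ∃ T : Finset V, Set.InjOn f T ∧ T.image f = K ∧ (G.induce T).Connected := by
  classical
  suffices h : ∀ k < K.card, ∃ T : Finset V,
      T.card = k + 1 ∧ Set.InjOn f T ∧ T.image f ⊆ K ∧ (G.induce T).Connected by
    have hK : 0 < K.card := Finset.card_pos.mpr ⟨_, hx₀⟩
    obtain ⟨T, hcard, hinj, hTK, hconn⟩ := h (K.card - 1) (by omega)
    refine ⟨T, hinj, Finset.eq_of_subset_of_card_le hTK ?_, hconn⟩
    rw [Finset.card_image_of_injOn hinj]
    omega
  intro k
  induction k with
  | zero =>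
    intro _
    refine ⟨{x₀}, rfl, by simp, by simpa using hx₀, ?_⟩
    rw [Finset.coe_singleton, induce_singleton_eq_top]
    exact connected_top
  | succ k ih =>
    intro hk
    obtain ⟨T, hcard, hinj, hTK, hconn⟩ := ih (by omega)
    have hTK' : T.image f ⊂ K := hTK.ssubset_of_ne fun h => by
      rw [← h, Finset.card_image_of_injOn hinj] at hk
      omega
    obtain ⟨t, htT, x, hxK, hxT, htx⟩ :=
      exists_adj_of_image_ssubset hlift hedge hQC (Finset.card_pos.mp (by omega)) hTK'
    have hxT' : x ∉ T := fun h => hxT (Finset.mem_image_of_mem f h)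
    refine ⟨insert x T, by rw [Finset.card_insert_of_notMem hxT', hcard], ?_, ?_, ?_⟩
    · rw [Finset.coe_insert, Set.injOn_insert (by simpa using hxT')]
      exact ⟨hinj, by simpa using hxT⟩
    · rw [Finset.image_insert]
      exact Finset.insert_subset hxK hTK
    · rw [Finset.coe_insert]
      exact hconn.induce_insert htT htx.symm

end SimpleGraph

theorem SimpleGraph.edgesLift_mkQ {R V : Type*} [Ring R] [AddCommGroup V] [Module R V]
    {G : SimpleGraph V} (L : Submodule R V)
    (hper : ∀ v ∈ L, ∀ p q : V, G.Adj p q → G.Adj (p + v) (q + v)) :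
    G.EdgesLift L.mkQ := by
  intro a c a' hac haa'
  have hv : a' - a ∈ L := (Submodule.Quotient.eq L).mp haa'
  refine ⟨c + (a' - a), ?_, by simpa using hper _ hv a c hac⟩
  simpa using (Submodule.Quotient.eq L).mpr (show c + (a' - a) - c ∈ L by simpa using hv)

section Lattice

variable {n : ℕ} (b : Module.Basis (Fin n) ℝ (EuclideanSpace ℝ (Fin n)))

theorem injOn_mkQ_unitCell : Set.InjOn (lat b).mkQ (unitCell b) := by
  intro p hp q hq hpq
  have hp' : ZSpan.fract b p = p := ZSpan.fract_eq_self.mpr fun i => ⟨(hp i).1, (hp i).2⟩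
  have hq' : ZSpan.fract b q = q := ZSpan.fract_eq_self.mpr fun i => ⟨(hq i).1, (hq i).2⟩
  rw [← hp', ← hq', ZSpan.fract_eq_fract, neg_add_eq_sub]
  exact (Submodule.Quotient.eq (lat b)).mp hpq.symm

theorem mem_periodicSet_iff {M : Set (EuclideanSpace ℝ (Fin n))} {x : EuclideanSpace ℝ (Fin n)} :
    x ∈ periodicSet b M ↔ (lat b).mkQ x ∈ (lat b).mkQ '' M := by
  simp only [periodicSet, Set.mem_image, Submodule.mkQ_apply, Submodule.Quotient.eq]
  constructor
  · rintro ⟨l, hl, p, hp, rfl⟩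
    exact ⟨p, hp, by simpa using (lat b).neg_mem hl⟩
  · rintro ⟨p, hp, hpx⟩
    exact ⟨x - p, by simpa using (lat b).neg_mem hpx, p, hp, by abel⟩

end Lattice

/-- If the quotient graph is connected (condition QC), then G contains a
tree of representatives: a set T ⊆ S of exactly m = |M| points, one representative of
each Λ-equivalence class p + Λ (p ∈ M), whose induced subgraph in G is connected. -/
theorem tree_of_representatives {n : ℕ}
    (b : Module.Basis (Fin n) ℝ (EuclideanSpace ℝ (Fin n)))
    (M : Finset (EuclideanSpace ℝ (Fin n))) (hMne : M.Nonempty)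
    (hMU : (M : Set (EuclideanSpace ℝ (Fin n))) ⊆ unitCell b)
    (G : SimpleGraph (EuclideanSpace ℝ (Fin n)))
    (hedge : ∀ p q, G.Adj p q → p ∈ periodicSet b ↑M ∧ q ∈ periodicSet b ↑M)
    (hper : ∀ v ∈ lat b, ∀ p q : EuclideanSpace ℝ (Fin n), G.Adj p q → G.Adj (p + v) (q + v))
    (hQC : ∀ p ∈ periodicSet b ↑M, ∀ q ∈ periodicSet b ↑M,
      ∃ v ∈ lat b, G.Reachable p (q + v)) :
    ∃ T : Finset (EuclideanSpace ℝ (Fin n)),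
      T.card = M.card ∧
      (T : Set (EuclideanSpace ℝ (Fin n))) ⊆ periodicSet b ↑M ∧
      (∀ p ∈ M, ∃! t, t ∈ T ∧ t - p ∈ lat b) ∧
      (G.induce (T : Set (EuclideanSpace ℝ (Fin n)))).Connected := by
  classical
  set π := (lat b).mkQ
  have hS : ∀ x, x ∈ periodicSet b ↑M ↔ π x ∈ M.image π := fun x => by
    rw [mem_periodicSet_iff, ← Finset.coe_image, Finset.mem_coe]
  have hQC' : ∀ x, π x ∈ M.image π → ∀ q ∈ M.image π, ∃ y, π y = q ∧ G.Reachable x y := by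
    intro x hx q hq
    obtain ⟨p, hpM, rfl⟩ := Finset.mem_image.mp hq
    obtain ⟨v, hv, hreach⟩ := hQC x ((hS x).mpr hx) p ((hS p).mpr (Finset.mem_image_of_mem π hpM))
    exact ⟨p + v, by simpa [π] using hv, hreach⟩
  obtain ⟨p₀, hp₀⟩ := hMne
  obtain ⟨T, hinj, himage, hconn⟩ := SimpleGraph.exists_connected_transversal
    (Finset.mem_image_of_mem π hp₀) (SimpleGraph.edgesLift_mkQ (lat b) hper)
    (fun a c hac => (hS c).mp (hedge a c hac).2) hQC'
  refine ⟨T, ?_, fun t ht => (hS t).mpr ?_, fun p hp => ?_, hconn⟩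
  · rw [← Finset.card_image_of_injOn hinj, himage,
      Finset.card_image_of_injOn ((injOn_mkQ_unitCell b).mono hMU)]
  · exact himage ▸ Finset.mem_image_of_mem π ht
  · obtain ⟨t, htT, htp⟩ := Finset.mem_image.mp (himage ▸ Finset.mem_image_of_mem π hp)
    refine ⟨t, ⟨htT, (Submodule.Quotient.eq _).mp htp⟩, fun t' ⟨ht'T, ht'p⟩ => hinj ht'T htT ?_⟩
    exact ((Submodule.Quotient.eq _).mpr ht'p).trans htp.symm
end
end

section
/- Let S = Λ + M be a periodic point set in ℝ^n. Then the bridge length β(S) equals the minimum real number δ ≥ 0 such that the graph G_δ on S, in which two distinct points p, q ∈ S are adjacent if and only if |p − q| ≤ δ, satisfies both: (QC) for all p, q ∈ S there exists v ∈ Λ such that p and q + v are joined by a path in G_δ, and (TS) the subgroup of Λ generated by {v ∈ Λ : there exists p ∈ S with p and p + v joined by a path in G_δ} equals Λ. -/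
noncomputable section

/-- `δ` bridges `S`: any two points of `S` are joined by a finite sequence of points of `S`
with consecutive distances at most `δ`. -/
def Bridges {n : ℕ} (δ : ℝ) (S : Set (EuclideanSpace ℝ (Fin n))) : Prop :=
  ∀ p ∈ S, ∀ q ∈ S, ∃ k : ℕ, ∃ f : Fin (k + 1) → EuclideanSpace ℝ (Fin n),
    f 0 = p ∧ f (Fin.last k) = q ∧ (∀ i, f i ∈ S) ∧
    ∀ i : Fin k, dist (f i.castSucc) (f i.succ) ≤ δ

/-- The bridge length β(S): the infimum of all δ ≥ 0 that bridge S. -/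
def bridgeLength {n : ℕ} (S : Set (EuclideanSpace ℝ (Fin n))) : ℝ :=
  sInf {δ : ℝ | 0 ≤ δ ∧ Bridges δ S}

/-- The graph G_δ on S in which two distinct points p, q ∈ S are adjacent
iff |p − q| ≤ δ. -/
def proxGraph {n : ℕ} (S : Set (EuclideanSpace ℝ (Fin n))) (δ : ℝ) :
    SimpleGraph (EuclideanSpace ℝ (Fin n)) :=
  SimpleGraph.fromRel (fun p q => p ∈ S ∧ q ∈ S ∧ dist p q ≤ δ)

/-!
Bridging `S` with `δ` is connectivity of `G_δ`. For a `Λ`-periodic set this splits into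
connectivity of the quotient graph `G_δ / Λ` (QC) and the requirement that the translation
vectors realised by paths of `G_δ` generate `Λ` (TS): a path from `p` to `p + v` can be
transported by `Λ` to any other point, so by (QC) every such `v` is realised from every point,
and by (TS) so is every vector of `Λ`. Bridging only depends on which distances of `S` are at
most `δ`; for `S = Λ + M` only finitely many distances lie below any bound, so the distances
just above `β(S)` leave a gap, whence `β(S)` itself bridges `S`.
-/

open Set Pointwise

variable {n : ℕ}

section ProxGraph

variable {S : Set (EuclideanSpace ℝ (Fin n))} {δ : ℝ}

theorem proxGraph_adj {x y : EuclideanSpace ℝ (Fin n)} :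
    (proxGraph S δ).Adj x y ↔ x ≠ y ∧ x ∈ S ∧ y ∈ S ∧ dist x y ≤ δ := by
  rw [proxGraph, SimpleGraph.fromRel_adj]
  constructor
  · rintro ⟨hne, ⟨hx, hy, hd⟩ | ⟨hy, hx, hd⟩⟩
    · exact ⟨hne, hx, hy, hd⟩
    · exact ⟨hne, hx, hy, dist_comm x y ▸ hd⟩
  · rintro ⟨hne, hx, hy, hd⟩
    exact ⟨hne, Or.inl ⟨hx, hy, hd⟩⟩

theorem proxGraph_reachable_of_dist_le {x y : EuclideanSpace ℝ (Fin n)} (hx : x ∈ S) (hy : y ∈ S)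
    (hd : dist x y ≤ δ) : (proxGraph S δ).Reachable x y := by
  rcases eq_or_ne x y with rfl | hne
  · rfl
  · exact (proxGraph_adj.mpr ⟨hne, hx, hy, hd⟩).reachable

theorem bridges_iff_forall_reachable :
    Bridges δ S ↔ ∀ p ∈ S, ∀ q ∈ S, (proxGraph S δ).Reachable p q := by
  constructor
  · intro h p hp q hq
    obtain ⟨k, f, rfl, rfl, hmem, hd⟩ := h p hp q hq
    have reach : ∀ i, (proxGraph S δ).Reachable (f 0) (f i) := by
      intro i
      induction i using Fin.induction with
      | zero => rfl
      | succ i ih => exact ih.trans (proxGraph_reachable_of_dist_le (hmem _) (hmem _) (hd i))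
    exact reach (Fin.last k)
  · intro h p hp q hq
    obtain ⟨w⟩ := h p hp q hq
    refine ⟨w.length, fun i => w.getVert i, w.getVert_zero, w.getVert_length, fun i => ?_,
      fun i => (proxGraph_adj.mp (w.adj_getVert_succ i.isLt)).2.2.2⟩
    rcases (Nat.lt_succ_iff.mp i.isLt).lt_or_eq with hi | hi
    · exact (proxGraph_adj.mp (w.adj_getVert_succ hi)).2.1
    · simpa [hi] using hq

theorem Bridges.of_forall_dist_le {δ' : ℝ} (hB : Bridges δ S)
    (h : ∀ d ∈ image2 dist S S, d ≤ δ → d ≤ δ') : Bridges δ' S := by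
  intro p hp q hq
  obtain ⟨k, f, h0, hk, hmem, hd⟩ := hB p hp q hq
  exact ⟨k, f, h0, hk, hmem, fun i => h _ (mem_image2_of_mem (hmem _) (hmem _)) (hd i)⟩

theorem isLeast_bridgeLength (hB : ∃ δ, 0 ≤ δ ∧ Bridges δ S)
    (hfin : ∀ C, (image2 dist S S ∩ Iic C).Finite) :
    IsLeast {δ | 0 ≤ δ ∧ Bridges δ S} (bridgeLength S) := by
  have hbdd : BddBelow {δ | 0 ≤ δ ∧ Bridges δ S} := ⟨0, fun δ hδ => hδ.1⟩
  refine ⟨⟨le_csInf hB fun δ hδ => hδ.1, ?_⟩, fun δ hδ => csInf_le hbdd hδ⟩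
  set β := bridgeLength S
  -- The finitely many distances in `(β, β + 1]` stay at distance `ε` from `β`.
  have hgap : IsOpen (image2 dist S S ∩ Iic (β + 1) ∩ Ioi β)ᶜ :=
    ((hfin (β + 1)).subset inter_subset_left).isClosed.isOpen_compl
  obtain ⟨ε, hε, hball⟩ := Metric.isOpen_iff.mp hgap β (fun h => lt_irrefl β h.2)
  obtain ⟨δ, hδ, hδlt⟩ := exists_lt_of_csInf_lt hB (lt_add_of_pos_right β (lt_min hε one_pos))
  show Bridges β S
  refine hδ.2.of_forall_dist_le fun d hd hdδ => not_lt.mp fun hβd => ?_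
  have hdβ : d < β + min ε 1 := hdδ.trans_lt hδlt
  have hd_ball : d ∈ Metric.ball β ε := by
    rw [Metric.mem_ball, Real.dist_eq, abs_of_pos (sub_pos.mpr hβd)]
    linarith [min_le_left ε 1]
  have hd_le : d ≤ β + 1 := by linarith [min_le_right ε 1]
  exact hball hd_ball ⟨⟨hd, hd_le⟩, hβd⟩

end ProxGraph

section Periodic

variable {L : Submodule ℤ (EuclideanSpace ℝ (Fin n))} {S : Set (EuclideanSpace ℝ (Fin n))}
  {δ : ℝ}

/-- Condition (QC). -/
def QuotientConnected (L : Submodule ℤ (EuclideanSpace ℝ (Fin n)))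
    (S : Set (EuclideanSpace ℝ (Fin n))) (δ : ℝ) : Prop :=
  ∀ p ∈ S, ∀ q ∈ S, ∃ v ∈ L, (proxGraph S δ).Reachable p (q + v)

/-- Condition (TS). -/
def TranslationsSpan (L : Submodule ℤ (EuclideanSpace ℝ (Fin n)))
    (S : Set (EuclideanSpace ℝ (Fin n))) (δ : ℝ) : Prop :=
  Submodule.span ℤ {v | v ∈ L ∧ ∃ p ∈ S, (proxGraph S δ).Reachable p (p + v)} = L

theorem translationsSpan_iff_le : TranslationsSpan L S δ ↔
    L ≤ Submodule.span ℤ {v | v ∈ L ∧ ∃ p ∈ S, (proxGraph S δ).Reachable p (p + v)} :=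
  ⟨fun h => h.ge, le_antisymm (Submodule.span_le.mpr fun _ hv => hv.1)⟩

theorem proxGraph_reachable_add (hS : ∀ x ∈ S, ∀ w ∈ L, x + w ∈ S)
    {x y w : EuclideanSpace ℝ (Fin n)} (hw : w ∈ L) (h : (proxGraph S δ).Reachable x y) :
    (proxGraph S δ).Reachable (x + w) (y + w) :=
  h.map
    { toFun := (· + w)
      map_rel' := fun {a c} hac => by
        obtain ⟨hne, ha, hc, hd⟩ := proxGraph_adj.mp hac
        exact proxGraph_adj.mpr ⟨fun h => hne (add_right_cancel h), hS a ha w hw,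
          hS c hc w hw, (dist_add_right a c w).trans_le hd⟩ }

theorem proxGraph_reachable_add_of_mem_span (hS : ∀ x ∈ S, ∀ w ∈ L, x + w ∈ S)
    (hQC : QuotientConnected L S δ) {w : EuclideanSpace ℝ (Fin n)}
    (hw : w ∈ Submodule.span ℤ {v | v ∈ L ∧ ∃ p ∈ S, (proxGraph S δ).Reachable p (p + v)}) :
    w ∈ L ∧ ∀ x ∈ S, (proxGraph S δ).Reachable x (x + w) := by
  rw [← Submodule.mem_toAddSubgroup, Submodule.span_int_eq_addSubgroupClosure] at hw
  induction hw using AddSubgroup.closure_induction with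
  | mem v hv =>
    obtain ⟨hvL, p, hp, hpv⟩ := hv
    refine ⟨hvL, fun x hx => ?_⟩
    -- Go from `x` to a translate `p + u` of `p`, follow the translated path to `p + u + v`,
    -- and come back to `x + v` along the translate by `v` of the first path.
    obtain ⟨u, hu, hxp⟩ := hQC x hx p hp
    have hpuv := proxGraph_reachable_add hS hu hpv
    rw [add_right_comm] at hpuv
    exact (hxp.trans hpuv).trans (proxGraph_reachable_add hS hvL hxp).symm
  | zero => exact ⟨zero_mem L, fun x _ => by rw [add_zero]⟩
  | add a c _ _ iha ihc =>
    refine ⟨add_mem iha.1 ihc.1, fun x hx => ?_⟩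
    rw [← add_assoc]
    exact (iha.2 x hx).trans (ihc.2 _ (hS x hx a iha.1))
  | neg a _ ih =>
    refine ⟨neg_mem ih.1, fun x hx => ?_⟩
    have h := ih.2 _ (hS x hx _ (neg_mem ih.1))
    rw [neg_add_cancel_right] at h
    exact h.symm

theorem bridges_iff_quotientConnected_and_translationsSpan
    (hS : ∀ x ∈ S, ∀ w ∈ L, x + w ∈ S) (hne : S.Nonempty) :
    Bridges δ S ↔ QuotientConnected L S δ ∧ TranslationsSpan L S δ := by
  rw [bridges_iff_forall_reachable]
  constructor
  · intro h
    refine ⟨fun p hp q hq => ⟨0, zero_mem L, by simpa using h p hp q hq⟩, ?_⟩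
    obtain ⟨p, hp⟩ := hne
    refine translationsSpan_iff_le.mpr fun v hv => ?_
    exact Submodule.subset_span ⟨hv, p, hp, h p hp _ (hS p hp v hv)⟩
  · rintro ⟨hQC, hTS⟩ p hp q hq
    obtain ⟨v, hv, hpq⟩ := hQC p hp q hq
    rw [← hTS] at hv
    exact hpq.trans ((proxGraph_reachable_add_of_mem_span hS hQC hv).2 q hq).symm

end Periodic

section PeriodicSet

variable {b : Module.Basis (Fin n) ℝ (EuclideanSpace ℝ (Fin n))}
  {M : Set (EuclideanSpace ℝ (Fin n))}

theorem add_mem_periodicSet_s4 {x w : EuclideanSpace ℝ (Fin n)} (hx : x ∈ periodicSet b M)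
    (hw : w ∈ lat b) : x + w ∈ periodicSet b M := by
  obtain ⟨l, hl, m, hm, rfl⟩ := hx
  exact ⟨l + w, add_mem hl hw, m, hm, add_right_comm l m w⟩

theorem mem_periodicSet_of_mem {m : EuclideanSpace ℝ (Fin n)} (hm : m ∈ M) :
    m ∈ periodicSet b M :=
  ⟨0, zero_mem _, m, hm, (zero_add m).symm⟩

theorem finite_inter_periodicSet (hMfin : M.Finite) {K : Set (EuclideanSpace ℝ (Fin n))}
    (hK : Bornology.IsBounded K) : (K ∩ periodicSet b M).Finite := by
  have hlat : ((K - M) ∩ lat b).Finite :=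
    ZSpan.setFinite_inter b (isBounded_sub hK hMfin.isBounded)
  refine (hlat.add hMfin).subset ?_
  rintro _ ⟨hxK, l, hl, m, hm, rfl⟩
  exact ⟨l, ⟨⟨l + m, hxK, m, hm, add_sub_cancel_right l m⟩, hl⟩, m, hm, rfl⟩

theorem finite_dist_periodicSet (hMfin : M.Finite) (C : ℝ) :
    (image2 dist (periodicSet b M) (periodicSet b M) ∩ Iic C).Finite := by
  have hK := finite_inter_periodicSet (b := b) hMfin (hMfin.isBounded.cthickening (δ := C))
  refine (hMfin.image2 dist hK).subset ?_
  rintro _ ⟨⟨_, ⟨l, hl, m, hm, rfl⟩, q, hq, rfl⟩, hdC⟩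
  -- Translating by `-l` moves `l + m` to `m ∈ M`.
  have hdist : dist (l + m) q = dist m (q - l) := by
    rw [dist_eq_norm, dist_eq_norm]
    congr 1
    abel
  refine ⟨m, hm, q - l, ⟨Metric.mem_cthickening_of_dist_le _ m C M hm ?_, ?_⟩, hdist.symm⟩
  · rw [dist_comm, ← hdist]
    exact hdC
  · simpa [sub_eq_add_neg] using add_mem_periodicSet_s4 hq (neg_mem hl)

theorem exists_bridges_periodicSet (hMfin : M.Finite) (hMne : M.Nonempty) :
    ∃ δ, 0 ≤ δ ∧ Bridges δ (periodicSet b M) := by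
  obtain ⟨m₀, hm₀⟩ := hMne
  have hm₀S : m₀ ∈ periodicSet b M := mem_periodicSet_of_mem hm₀
  obtain ⟨C, hC⟩ := Metric.isBounded_iff.mp hMfin.isBounded
  obtain ⟨R, hR⟩ := (finite_range fun i => ‖b i‖).bddAbove
  refine ⟨max C R, dist_nonneg.trans ((hC hm₀ hm₀).trans (le_max_left C R)), ?_⟩
  rw [bridges_iff_quotientConnected_and_translationsSpan (L := lat b)
    (fun x hx w hw => add_mem_periodicSet_s4 hx hw) ⟨m₀, hm₀S⟩]
  constructor
  · rintro _ ⟨l, hl, m, hm, rfl⟩ _ ⟨l', hl', m', hm', rfl⟩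
    refine ⟨l - l', sub_mem hl hl', proxGraph_reachable_of_dist_le ⟨l, hl, m, hm, rfl⟩
      ⟨l, hl, m', hm', by abel⟩ ?_⟩
    rw [show l' + m' + (l - l') = l + m' by abel, dist_add_left]
    exact (hC hm hm').trans (le_max_left C R)
  · refine translationsSpan_iff_le.mpr (Submodule.span_le.mpr ?_)
    rintro _ ⟨i, rfl⟩
    have hbi : b i ∈ lat b := Submodule.subset_span ⟨i, rfl⟩
    refine Submodule.subset_span ⟨hbi, m₀, hm₀S,
      proxGraph_reachable_of_dist_le hm₀S (add_mem_periodicSet_s4 hm₀S hbi) ?_⟩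
    rw [dist_self_add_right]
    exact (hR ⟨i, rfl⟩).trans (le_max_right C R)

end PeriodicSet

theorem bridgeLength_eq_min_delta_general {n : ℕ}
    (b : Module.Basis (Fin n) ℝ (EuclideanSpace ℝ (Fin n)))
    (M : Set (EuclideanSpace ℝ (Fin n))) (hMfin : M.Finite) (hMne : M.Nonempty) :
    IsLeast {δ : ℝ | 0 ≤ δ ∧
        (∀ p ∈ periodicSet b M, ∀ q ∈ periodicSet b M,
          ∃ v ∈ lat b, (proxGraph (periodicSet b M) δ).Reachable p (q + v)) ∧
        Submodule.span ℤ {v : EuclideanSpace ℝ (Fin n) | v ∈ lat b ∧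
          ∃ p ∈ periodicSet b M,
            (proxGraph (periodicSet b M) δ).Reachable p (p + v)} = lat b}
      (bridgeLength (periodicSet b M)) := by
  have hS : ∀ x ∈ periodicSet b M, ∀ w ∈ lat b, x + w ∈ periodicSet b M :=
    fun x hx w hw => add_mem_periodicSet_s4 hx hw
  have hSne : (periodicSet b M).Nonempty := hMne.imp fun _ => mem_periodicSet_of_mem
  have hset : {δ : ℝ | 0 ≤ δ ∧ QuotientConnected (lat b) (periodicSet b M) δ ∧
      TranslationsSpan (lat b) (periodicSet b M) δ} =
      {δ | 0 ≤ δ ∧ Bridges δ (periodicSet b M)} :=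
    ext fun δ => and_congr_right fun _ =>
      (bridges_iff_quotientConnected_and_translationsSpan hS hSne).symm
  exact hset ▸ isLeast_bridgeLength (exists_bridges_periodicSet hMfin hMne)
    (finite_dist_periodicSet hMfin)

/-- β(S) equals the minimum δ ≥ 0 such that the graph G_δ on S satisfies
both termination conditions (QC) and (TS) of the bridge-length algorithm. -/
theorem bridgeLength_eq_min_delta {n : ℕ}
    (b : Module.Basis (Fin n) ℝ (EuclideanSpace ℝ (Fin n)))
    (M : Set (EuclideanSpace ℝ (Fin n))) (hMfin : M.Finite) (hMne : M.Nonempty)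
    (hMU : M ⊆ unitCell b) :
    IsLeast {δ : ℝ | 0 ≤ δ ∧
        (∀ p ∈ periodicSet b M, ∀ q ∈ periodicSet b M,
          ∃ v ∈ lat b, (proxGraph (periodicSet b M) δ).Reachable p (q + v)) ∧
        Submodule.span ℤ {v : EuclideanSpace ℝ (Fin n) | v ∈ lat b ∧
          ∃ p ∈ periodicSet b M,
            (proxGraph (periodicSet b M) δ).Reachable p (p + v)} = lat b}
      (bridgeLength (periodicSet b M)) :=
  bridgeLength_eq_min_delta_general b M hMfin hMne
end
end

section
/- Let S = Λ + M be a periodic point set in ℝ^n with unit cell U on a basis v_1, …, v_n. Let b = max_{i=1,…,n} |v_i| be the maximum edge-length of U and let d = max over all sign vectors (ε_1,…,ε_n) ∈ {−1,+1}^n of |Σ_{i=1}^n ε_i v_i| be the length of the longest diagonal of U. Then β(S) ≤ max{b, d/2}. -/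
noncomputable section

/-!
Given points p, q of S, write p - q = Σ cᵢ vᵢ and round each cᵢ to an integer; this gives a
lattice vector l with p - (q + l) = Σ tᵢ vᵢ, |tᵢ| ≤ 1/2. The norm is convex, so over the cube
|tᵢ| ≤ 1/2 it is largest at a vertex, i.e. at half a diagonal: |p - (q + l)| ≤ d/2. Since S is
invariant under Λ, the point q + l lies in S and is joined back to q by steps ±vᵢ of length ≤ b.
-/

open Relation

theorem Relation.ReflTransGen.exists_fin_chain {α : Type*} {r : α → α → Prop} {p q : α}
    (h : ReflTransGen r p q) :
    ∃ k : ℕ, ∃ f : Fin (k + 1) → α,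
      f 0 = p ∧ f (Fin.last k) = q ∧ ∀ i : Fin k, r (f i.castSucc) (f i.succ) := by
  induction h with
  | refl => exact ⟨0, fun _ => p, rfl, rfl, fun i => i.elim0⟩
  | @tail x y _ hxy ih =>
    obtain ⟨k, f, hf0, hfk, hf⟩ := ih
    refine ⟨k + 1, Fin.snoc f y, ?_, Fin.snoc_last _ _, Fin.lastCases ?_ fun i => ?_⟩
    · rw [← Fin.castSucc_zero, Fin.snoc_castSucc, hf0]
    · rwa [Fin.succ_last, Fin.snoc_last, Fin.snoc_castSucc, hfk]
    · rw [Fin.succ_castSucc, Fin.snoc_castSucc, Fin.snoc_castSucc]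
      exact hf i

def chainStep {α : Type*} [PseudoMetricSpace α] (δ : ℝ) (S : Set α) (x y : α) : Prop :=
  x ∈ S ∧ y ∈ S ∧ dist x y ≤ δ

theorem bridges_of_reflTransGen {n : ℕ} {δ : ℝ} {S : Set (EuclideanSpace ℝ (Fin n))}
    (h : ∀ p ∈ S, ∀ q ∈ S, ReflTransGen (chainStep δ S) p q) : Bridges δ S := by
  intro p hp q hq
  obtain ⟨k, f, hf0, hfk, hf⟩ := (h p hp q hq).exists_fin_chain
  exact ⟨k, f, hf0, hfk, Fin.cases (hf0 ▸ hp) fun i => (hf i).2.1, fun i => (hf i).2.2⟩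

theorem reflTransGen_chainStep_add_of_mem_closure {G : Type*} [SeminormedAddCommGroup G]
    {δ : ℝ} {S s : Set G} (hs : ∀ v ∈ s, ‖v‖ ≤ δ)
    (hS : ∀ x ∈ S, ∀ l ∈ AddSubgroup.closure s, x + l ∈ S)
    {l : G} (hl : l ∈ AddSubgroup.closure s) {x : G} (hx : x ∈ S) :
    ReflTransGen (chainStep δ S) x (x + l) := by
  induction hl using AddSubgroup.closure_induction_left generalizing x with
  | zero => simpa using ReflTransGen.refl
  | add_left v hv l _ ih =>
    have hxv : x + v ∈ S := hS x hx v (AddSubgroup.subset_closure hv)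
    refine ReflTransGen.head ⟨hx, hxv, (dist_self_add_right v x).trans_le (hs v hv)⟩ ?_
    simpa [add_assoc] using ih hxv
  | neg_add_cancel v hv l _ ih =>
    have hxv : x + -v ∈ S := hS x hx (-v) (neg_mem (AddSubgroup.subset_closure hv))
    refine ReflTransGen.head
      ⟨hx, hxv, (dist_self_add_right (-v) x).trans_le ((norm_neg v).trans_le (hs v hv))⟩ ?_
    simpa [add_assoc] using ih hxv

theorem exists_sign_norm_sum_smul_ge {ι E : Type*} [Fintype ι] [SeminormedAddCommGroup E]
    [NormedSpace ℝ E] (v : ι → E) {c : ι → ℝ} (hc : ∀ i, |c i| ≤ 1) :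
    ∃ ε : ι → Bool, ‖∑ i, c i • v i‖ ≤ ‖∑ i, (if ε i then (1 : ℝ) else -1) • v i‖ := by
  have hcube : c ∈ convexHull ℝ (Set.univ.pi fun _ => ({-1, 1} : Set ℝ)) := by
    rw [convexHull_pi]
    intro i _
    rw [convexHull_pair, segment_eq_Icc (by norm_num)]
    exact abs_le.1 (hc i)
  obtain ⟨σ, hσ, hle⟩ := (convexOn_univ_norm.comp_linearMap
    (Fintype.linearCombination ℝ v)).exists_ge_of_mem_convexHull (Set.subset_univ _) hcube
  refine ⟨fun i => decide (σ i = 1), hle.trans_eq ?_⟩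
  simp only [Function.comp_apply, Fintype.linearCombination_apply]
  refine congrArg norm (Finset.sum_congr rfl fun i _ => ?_)
  rcases hσ i (Set.mem_univ i) with h | (h : σ i = 1) <;> norm_num [h]

theorem Module.Basis.exists_mem_span_int_norm_sub_le {ι E : Type*} [Fintype ι]
    [SeminormedAddCommGroup E] [NormedSpace ℝ E] (b : Module.Basis ι ℝ E) (x : E) :
    ∃ l ∈ Submodule.span ℤ (Set.range b), ∃ ε : ι → Bool,
      ‖x - l‖ ≤ ‖∑ i, (if ε i then (1 : ℝ) else -1) • b i‖ / 2 := by
  set c : ι → ℝ := fun i => b.repr x i - round (b.repr x i)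
  obtain ⟨ε, hε⟩ := exists_sign_norm_sum_smul_ge b (c := fun i => 2 * c i) fun i => by
    rw [abs_mul, abs_two]; linarith [abs_sub_round (b.repr x i)]
  refine ⟨∑ i, (round (b.repr x i) : ℤ) • b i,
    Submodule.sum_mem _ fun i _ => Submodule.smul_mem _ _ (Submodule.subset_span ⟨i, rfl⟩), ε, ?_⟩
  have hx : x - ∑ i, (round (b.repr x i) : ℤ) • b i = (1 / 2 : ℝ) • ∑ i, (2 * c i) • b i := by
    nth_rw 1 [← b.sum_repr x]
    rw [Finset.smul_sum, ← Finset.sum_sub_distrib]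
    refine Finset.sum_congr rfl fun i _ => ?_
    rw [smul_smul, ← Int.cast_smul_eq_zsmul ℝ, ← sub_smul]
    congr 1
    simp only [c]
    ring
  rw [hx, _root_.norm_smul, Real.norm_of_nonneg (by norm_num)]
  linarith

theorem periodicSet_add_mem {n : ℕ} {b : Module.Basis (Fin n) ℝ (EuclideanSpace ℝ (Fin n))}
    {M : Set (EuclideanSpace ℝ (Fin n))} {x l : EuclideanSpace ℝ (Fin n)}
    (hx : x ∈ periodicSet b M) (hl : l ∈ lat b) : x + l ∈ periodicSet b M := by
  obtain ⟨l₀, hl₀, p, hp, rfl⟩ := hx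
  exact ⟨l₀ + l, add_mem hl₀ hl, p, hp, by abel⟩

theorem mem_lat_iff_mem_closure {n : ℕ} {b : Module.Basis (Fin n) ℝ (EuclideanSpace ℝ (Fin n))}
    {l : EuclideanSpace ℝ (Fin n)} : l ∈ lat b ↔ l ∈ AddSubgroup.closure (Set.range b) := by
  rw [← Submodule.mem_toAddSubgroup, lat, Submodule.span_int_eq_addSubgroupClosure]

theorem bridges_periodicSet {n : ℕ} (b : Module.Basis (Fin n) ℝ (EuclideanSpace ℝ (Fin n)))
    (M : Set (EuclideanSpace ℝ (Fin n))) {δ : ℝ} (hb : ∀ i, ‖b i‖ ≤ δ)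
    (hd : ∀ ε : Fin n → Bool, ‖∑ i, (if ε i then (1 : ℝ) else -1) • b i‖ ≤ 2 * δ) :
    Bridges δ (periodicSet b M) := by
  have hwalk : ∀ x ∈ periodicSet b M, ∀ l ∈ lat b,
      ReflTransGen (chainStep δ (periodicSet b M)) x (x + l) := fun x hx l hl =>
    reflTransGen_chainStep_add_of_mem_closure (by rintro _ ⟨i, rfl⟩; exact hb i)
      (fun y hy l hl => periodicSet_add_mem hy (mem_lat_iff_mem_closure.2 hl))
      (mem_lat_iff_mem_closure.1 hl) hx
  refine bridges_of_reflTransGen fun p hp q hq => ?_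
  obtain ⟨l, hl, ε, hpl⟩ := b.exists_mem_span_int_norm_sub_le (p - q)
  have hql : q + l ∈ periodicSet b M := periodicSet_add_mem hq hl
  have hstep : chainStep δ (periodicSet b M) p (q + l) := ⟨hp, hql, by
    rw [dist_eq_norm, ← sub_sub]; linarith [hpl, hd ε]⟩
  simpa using ReflTransGen.head hstep (hwalk _ hql (-l) (neg_mem hl))

theorem bridgeLength_le_cell_bound_general {n : ℕ} (hn : 0 < n)
    (b : Module.Basis (Fin n) ℝ (EuclideanSpace ℝ (Fin n)))
    (M : Set (EuclideanSpace ℝ (Fin n))) :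
    bridgeLength (periodicSet b M) ≤
      max (Finset.univ.sup' ⟨⟨0, hn⟩, Finset.mem_univ _⟩ fun i => ‖b i‖)
        ((Finset.univ.sup' ⟨fun _ => true, Finset.mem_univ _⟩
          fun ε : Fin n → Bool => ‖∑ i, (if ε i then (1 : ℝ) else -1) • b i‖) / 2) := by
  set B := Finset.univ.sup' ⟨⟨0, hn⟩, Finset.mem_univ _⟩ fun i => ‖b i‖
  set D := Finset.univ.sup' ⟨fun _ => true, Finset.mem_univ _⟩
    fun ε : Fin n → Bool => ‖∑ i, (if ε i then (1 : ℝ) else -1) • b i‖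
  have hb : ∀ i, ‖b i‖ ≤ max B (D / 2) := fun i =>
    (Finset.le_sup' (fun j => ‖b j‖) (Finset.mem_univ i)).trans (le_max_left _ _)
  have hd : ∀ ε : Fin n → Bool, ‖∑ i, (if ε i then (1 : ℝ) else -1) • b i‖ ≤ 2 * max B (D / 2) :=
    fun ε => by
      have hD := Finset.le_sup' (fun ε : Fin n → Bool => ‖∑ i, (if ε i then (1 : ℝ) else -1) • b i‖)
        (Finset.mem_univ ε)
      linarith [le_max_right B (D / 2)]
  exact csInf_le ⟨0, fun _ h => h.1⟩
    ⟨(norm_nonneg _).trans (hb ⟨0, hn⟩), bridges_periodicSet b M hb hd⟩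

/-- β(S) ≤ max{b, d/2}, where b is the maximum length of a basis vector of
the unit cell U and d is the length of the longest diagonal of U, i.e. the maximum over
all sign vectors (ε_1,…,ε_n) ∈ {−1,+1}^n of |Σ ε_i v_i|. -/
theorem bridgeLength_le_cell_bound {n : ℕ} (hn : 0 < n)
    (b : Module.Basis (Fin n) ℝ (EuclideanSpace ℝ (Fin n)))
    (M : Set (EuclideanSpace ℝ (Fin n))) (hMfin : M.Finite) (hMne : M.Nonempty)
    (hMU : M ⊆ unitCell b) :
    bridgeLength (periodicSet b M) ≤
      max (Finset.univ.sup' ⟨⟨0, hn⟩, Finset.mem_univ _⟩ fun i => ‖b i‖)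
        ((Finset.univ.sup' ⟨fun _ => true, Finset.mem_univ _⟩
          fun ε : Fin n → Bool => ‖∑ i, (if ε i then (1 : ℝ) else -1) • b i‖) / 2) :=
  bridgeLength_le_cell_bound_general hn b M
end
end

section
/- Let S = Λ + M be a nonempty periodic point set in ℝ^n and let R(S) = sup_{x ∈ ℝ^n} dist(x, S) be its covering radius, i.e. the smallest radius R such that the union of closed balls of radius R centred at all points of S covers ℝ^n. Then R(S) is finite and β(S) ≤ 2·R(S). -/
noncomputable section

/-!
Every point of `ℝⁿ` lies within `R` of `S`. To join `p, q ∈ S`, cut the segment `[p, q]` into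
steps of length at most `ε` and replace each subdivision point by a point of `S` at distance at
most `R` (keeping `p` and `q` themselves); consecutive replacements are then at most `2R + ε`
apart. Finiteness of `R` comes from the bounded fundamental domain: every `x` is a lattice
translate of its fractional part, which lies in the unit cell together with any motif point.
-/

open Metric

theorem exists_fin_chain_dist_le {E : Type*} [NormedAddCommGroup E] [NormedSpace ℝ E]
    (p q : E) {η : ℝ} (hη : 0 < η) :
    ∃ N : ℕ, ∃ x : Fin (N + 1) → E, x 0 = p ∧ x (Fin.last N) = q ∧
      ∀ i : Fin N, dist (x i.castSucc) (x i.succ) ≤ η := by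
  obtain ⟨N, hN⟩ := exists_nat_gt (dist p q / η)
  have hN0 : (0 : ℝ) < N := (div_nonneg dist_nonneg hη.le).trans_lt hN
  refine ⟨N, fun j => AffineMap.lineMap p q ((j : ℝ) / N), by simp, by simp [hN0.ne'], ?_⟩
  have hstep : dist p q / N ≤ η := by
    rw [div_le_iff₀ hN0, mul_comm]; exact ((div_lt_iff₀ hη).1 hN).le
  intro i
  convert hstep using 1
  rw [dist_lineMap_lineMap, Real.dist_eq, Fin.val_castSucc, Fin.val_succ, Nat.cast_succ,
    ← sub_div, sub_add_cancel_left, abs_div, abs_neg, abs_one, abs_of_pos hN0, one_div_mul_eq_div]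

section Bridges

variable {n : ℕ} {S : Set (EuclideanSpace ℝ (Fin n))}

theorem bridges_of_forall_exists_dist_le {r η : ℝ}
    (hS : ∀ x, ∃ s ∈ S, dist x s ≤ r) (hη : 0 < η) : Bridges (2 * r + η) S := by
  have hr : 0 ≤ r := let ⟨_, _, h⟩ := hS 0; dist_nonneg.trans h
  have hnear : ∀ x, ∃ s ∈ S, dist x s ≤ r ∧ (x ∈ S → s = x) := fun x => by
    by_cases hx : x ∈ S
    · exact ⟨x, hx, by rwa [dist_self], fun _ => rfl⟩
    · obtain ⟨s, hs, hxs⟩ := hS x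
      exact ⟨s, hs, hxs, fun h => absurd h hx⟩
  choose g hgS hg hgfix using hnear
  intro p hp q hq
  obtain ⟨N, x, hx0, hxN, hx⟩ := exists_fin_chain_dist_le p q hη
  refine ⟨N, g ∘ x, by simp [hx0, hgfix p hp], by simp [hxN, hgfix q hq], fun _ => hgS _,
    fun i => ?_⟩
  calc dist (g (x i.castSucc)) (g (x i.succ))
      ≤ dist (g (x i.castSucc)) (x i.castSucc) + dist (x i.castSucc) (x i.succ) +
          dist (x i.succ) (g (x i.succ)) := dist_triangle4 _ _ _ _
    _ ≤ r + η + r := by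
        gcongr
        · rw [dist_comm]; exact hg _
        · exact hx i
        · exact hg _
    _ = 2 * r + η := by ring

theorem bridgeLength_le_two_mul {r : ℝ} (hS : S.Nonempty) (h : ∀ x, infDist x S ≤ r) :
    bridgeLength S ≤ 2 * r := by
  have hr : 0 ≤ r := infDist_nonneg.trans (h 0)
  refine le_of_forall_pos_le_add fun ε hε => ?_
  have hnear : ∀ x, ∃ s ∈ S, dist x s ≤ r + ε / 4 := fun x =>
    let ⟨s, hs, hxs⟩ := (infDist_lt_iff hS).1 ((h x).trans_lt (by linarith : r < r + ε / 4))
    ⟨s, hs, hxs.le⟩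
  have hbridges := bridges_of_forall_exists_dist_le hnear (half_pos hε)
  calc bridgeLength S ≤ 2 * (r + ε / 4) + ε / 2 :=
        csInf_le ⟨0, fun _ hδ => hδ.1⟩ ⟨by positivity, hbridges⟩
    _ = 2 * r + ε := by ring

end Bridges

theorem unitCell_eq_fundamentalDomain {n : ℕ}
    (b : Module.Basis (Fin n) ℝ (EuclideanSpace ℝ (Fin n))) :
    unitCell b = ZSpan.fundamentalDomain b := by
  ext x
  simp [unitCell, ZSpan.mem_fundamentalDomain]

theorem exists_mem_periodicSet_dist_le_diam {n : ℕ}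
    {b : Module.Basis (Fin n) ℝ (EuclideanSpace ℝ (Fin n))}
    {M : Set (EuclideanSpace ℝ (Fin n))} {p : EuclideanSpace ℝ (Fin n)}
    (hp : p ∈ M) (hpU : p ∈ unitCell b) (x : EuclideanSpace ℝ (Fin n)) :
    ∃ s ∈ periodicSet b M, dist x s ≤ diam (unitCell b) := by
  rw [unitCell_eq_fundamentalDomain] at hpU ⊢
  refine ⟨ZSpan.floor b x + p, ⟨_, (ZSpan.floor b x).2, p, hp, rfl⟩, ?_⟩
  calc dist x (ZSpan.floor b x + p) = dist (ZSpan.fract b x) p := by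
        rw [ZSpan.fract_apply, dist_eq_norm, dist_eq_norm, sub_sub]
    _ ≤ diam (ZSpan.fundamentalDomain b) :=
        dist_le_diam_of_mem (ZSpan.fundamentalDomain_isBounded b)
          (ZSpan.fract_mem_fundamentalDomain b x) hpU

theorem bridgeLength_le_two_covering_radius_general {n : ℕ}
    (b : Module.Basis (Fin n) ℝ (EuclideanSpace ℝ (Fin n)))
    (M : Set (EuclideanSpace ℝ (Fin n))) (hMne : M.Nonempty)
    (hMU : M ⊆ unitCell b) :
    BddAbove (Set.range fun x : EuclideanSpace ℝ (Fin n) =>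
      Metric.infDist x (periodicSet b M)) ∧
    bridgeLength (periodicSet b M) ≤
      2 * ⨆ x : EuclideanSpace ℝ (Fin n), Metric.infDist x (periodicSet b M) := by
  obtain ⟨p, hp⟩ := hMne
  have hnear := exists_mem_periodicSet_dist_le_diam hp (hMU hp)
  have hcover : ∀ x, infDist x (periodicSet b M) ≤ diam (unitCell b) := fun x =>
    let ⟨_, hs, hxs⟩ := hnear x
    (infDist_le_dist_of_mem hs).trans hxs
  have hbdd : BddAbove (Set.range fun x => infDist x (periodicSet b M)) :=
    ⟨_, Set.forall_mem_range.2 hcover⟩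
  obtain ⟨s, hs, -⟩ := hnear 0
  exact ⟨hbdd, bridgeLength_le_two_mul ⟨s, hs⟩ fun x => le_ciSup hbdd x⟩

/-- For a nonempty periodic point set S = Λ + M, the covering radius
R(S) = sup_{x ∈ ℝ^n} dist(x, S) is finite and β(S) ≤ 2·R(S). -/
theorem bridgeLength_le_two_covering_radius {n : ℕ}
    (b : Module.Basis (Fin n) ℝ (EuclideanSpace ℝ (Fin n)))
    (M : Set (EuclideanSpace ℝ (Fin n))) (hMfin : M.Finite) (hMne : M.Nonempty)
    (hMU : M ⊆ unitCell b) :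
    BddAbove (Set.range fun x : EuclideanSpace ℝ (Fin n) =>
      Metric.infDist x (periodicSet b M)) ∧
    bridgeLength (periodicSet b M) ≤
      2 * ⨆ x : EuclideanSpace ℝ (Fin n), Metric.infDist x (periodicSet b M) :=
  bridgeLength_le_two_covering_radius_general b M hMne hMU
end
end
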